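/- arXiv:2304.06609 — 2 statements merged into one kernel-verified Lean document; each statement's English description precedes it below -/
import Mathlib

section
/- Let M be a finitely generated R-module of dimension d, let Ass(M) = {p_1,…,p_m}, and let 0 = N_1 ∩ … ∩ N_m be an irredundant primary decomposition of 0 in M with M/N_j a p_j-primary module. For each i ∈ {0,…,d}, let a_i be the product of all primes p ∈ Ass(M) with dim(R/p) ≤ i (and a_i = R if there is no such prime). Then for all i ∈ {0,…,d}: δ_i(M) = H^0_{a_i}(M) = ⋂_{j : dim(R/p_j) > i} N_j, where the intersection over the empty index set is taken to be M. -/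
/-!
Write `K = ⋂_{dim R/p_j > i} N_j` and `T = H^0_{a_i}(M)`; we show `K ⊆ T ⊆ δ_i(M) ⊆ K`.
A power of `p_j` kills `M/N_j`, so a power of `a_i` maps `K` into `⋂_j N_j = 0`. The support
of `T` lies in `V(a_i) = ⋃_{dim R/p_j ≤ i} V(p_j)`, so `dim T ≤ i`. Finally, if `W ⊄ N_j` then
`p_j` is an associated prime of the image of `W` in `M/N_j`, hence lies in the support of `W`,
so `dim W ≥ dim R/p_j`.
-/

open CategoryTheory

noncomputable section

/-- The (Krull) dimension of a module: the Krull dimension of its support.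
The dimension of the zero module is `⊥` (thought of as `-1`). -/
noncomputable def mDim (R : Type) [CommRing R] (M : Type) [AddCommGroup M] [Module R M] :
    WithBot ℕ∞ :=
  Order.krullDim (Module.support R M)

/-- The `i`-th Ext module `Ext_R^i(A, B)` (as a type). -/
noncomputable abbrev extC (R : Type) [CommRing R] (i : ℕ) (A B : Type)
    [AddCommGroup A] [Module R A] [AddCommGroup B] [Module R B] : Type :=
  ↥(((Ext R (ModuleCat R) i).obj (Opposite.op (ModuleCat.of R A))).obj (ModuleCat.of R B))

/-- The depth of a module `M` with respect to an ideal `I`: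
the least `i` such that `Ext_R^i(R/I, M) ≠ 0` (and `⊤` if there is no such `i`,
in particular the depth of the zero module is `⊤ = +∞`). -/
noncomputable def mDepth (R : Type) [CommRing R] (I : Ideal R) (M : Type)
    [AddCommGroup M] [Module R M] : ℕ∞ :=
  sInf {i : ℕ∞ | ∃ j : ℕ, i = j ∧ Nontrivial (extC R j (R ⧸ I) M)}

/-- `M` is a Cohen-Macaulay module (with respect to the (maximal) ideal `I`) if it is
nonzero and its depth equals its dimension. -/
def IsCM (R : Type) [CommRing R] (I : Ideal R) (M : Type) [AddCommGroup M] [Module R M] :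
    Prop :=
  Nontrivial M ∧ (mDepth R I M : WithBot ℕ∞) = mDim R M

/-- The subquotient `N'/N` of a module (most meaningful when `N ≤ N'`). -/
abbrev subQuot (R : Type) [CommRing R] {M : Type} [AddCommGroup M] [Module R M]
    (N N' : Submodule R M) : Type :=
  N' ⧸ (Submodule.comap N'.subtype N)

/-- `F 0 = 0 ⊊ F 1 ⊊ ⋯ ⊊ F r = M` is a sCM filtration: each quotient `F (i+1) / F i`
is Cohen-Macaulay and the dimensions of the quotients are strictly increasing. -/
def IsSCMFil (R : Type) [CommRing R] (I : Ideal R) {M : Type} [AddCommGroup M] [Module R M]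
    (r : ℕ) (F : ℕ → Submodule R M) : Prop :=
  F 0 = ⊥ ∧ F r = ⊤ ∧ (∀ i < r, F i < F (i + 1)) ∧
    (∀ i < r, IsCM R I (subQuot R (F i) (F (i + 1)))) ∧
    (∀ i, i + 1 < r →
      mDim R (subQuot R (F i) (F (i + 1))) < mDim R (subQuot R (F (i + 1)) (F (i + 2))))

/-- `M` is sequentially Cohen-Macaulay if it admits a sCM filtration. -/
def IsSeqCM (R : Type) [CommRing R] (I : Ideal R) (M : Type) [AddCommGroup M] [Module R M] :
    Prop :=
  ∃ (r : ℕ) (F : ℕ → Submodule R M), IsSCMFil R I r F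

/-- `δ_c(M)`: the largest submodule of `M` of dimension at most `c`. -/
noncomputable def deltaSub (R : Type) [CommRing R] (M : Type) [AddCommGroup M] [Module R M]
    (c : ℕ) : Submodule R M :=
  sSup {N : Submodule R M | mDim R ↥N ≤ (c : WithBot ℕ∞)}

/-- `δ_{c-1}(M)`, with `δ_{-1}(M) = 0`. -/
noncomputable def deltaSubPred (R : Type) [CommRing R] (M : Type) [AddCommGroup M] [Module R M] :
    ℕ → Submodule R M
  | 0 => ⊥
  | (c + 1) => deltaSub R M c

/-- `H^0_I(M)`, the `I`-power-torsion submodule of `M`. -/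
noncomputable def tors (R : Type) [CommRing R] (I : Ideal R) (M : Type) [AddCommGroup M]
    [Module R M] : Submodule R M :=
  ⨆ t : ℕ, Submodule.torsionBySet R M ((I ^ t : Ideal R) : Set R)

end

section KrullDim

variable {α : Type*} [Preorder α]

theorem Order.krullDim_le_of_subset {S T : Set α} (h : S ⊆ T) :
    Order.krullDim S ≤ Order.krullDim T :=
  Order.krullDim_le_of_strictMono (Set.inclusion h) fun _ _ hlt => hlt

/-- A chain in `S` lies above its first element, hence inside an upper set containing it. -/
theorem Order.krullDim_le_of_forall_mem_isUpperSet {S : Set α} {c : WithBot ℕ∞}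
    (h : ∀ x ∈ S, ∃ C : Set α, IsUpperSet C ∧ x ∈ C ∧ Order.krullDim C ≤ c) :
    Order.krullDim S ≤ c := by
  refine iSup_le fun l => ?_
  obtain ⟨C, hC, hhead, hdim⟩ := h l.head l.head.2
  let l' : LTSeries C :=
    ⟨l.length, fun k => ⟨l k, hC (l.monotone (Fin.zero_le k)) hhead⟩, fun k => l.step k⟩
  exact (Order.LTSeries.length_le_krullDim l').trans hdim

end KrullDim

section Support

variable {R : Type*} [CommRing R] {M : Type*} [AddCommGroup M] [Module R M]

theorem IsAssociatedPrime.mem_support {P : Ideal R} (h : IsAssociatedPrime P M) :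
    (⟨P, h.isPrime⟩ : PrimeSpectrum R) ∈ Module.support R M := by
  obtain ⟨x, hx⟩ := h.eq_radical_colon
  refine Module.mem_support_iff_exists_annihilator.mpr ⟨x, fun r hr => ?_⟩
  change r ∈ P
  rw [hx]
  refine Ideal.le_radical (Submodule.mem_colon_singleton.mpr ?_)
  simpa using (Submodule.mem_annihilator_span_singleton x r).mp hr

theorem exists_pow_le_annihilator_of_associatedPrimes_subset [IsNoetherianRing R]
    [Module.Finite R M] {P : Ideal R} (h : associatedPrimes R M ⊆ {P}) :
    ∃ n, P ^ n ≤ Module.annihilator R M := by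
  refine Ideal.exists_pow_le_of_le_radical_of_fg ?_ (IsNoetherian.noetherian P)
  rw [← Ideal.sInf_minimalPrimes]
  exact le_sInf fun Q hQ =>
    (h (Module.associatedPrimes.minimalPrimes_annihilator_subset_associatedPrimes R M hQ)).ge

end Support

section Dimension

variable {R : Type} [CommRing R] {M : Type} [AddCommGroup M] [Module R M]

theorem mDim_quotient (I : Ideal R) :
    mDim R (R ⧸ I) = Order.krullDim (PrimeSpectrum.zeroLocus (I : Set R)) := by
  rw [mDim, Module.support_eq_zeroLocus, Ideal.annihilator_quotient]

theorem mDim_quotient_le_of_mem_support {P : PrimeSpectrum R} (h : P ∈ Module.support R M) :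
    mDim R (R ⧸ P.asIdeal) ≤ mDim R M := by
  rw [mDim_quotient, mDim]
  exact Order.krullDim_le_of_subset fun Q hQ => Module.mem_support_mono hQ h

end Dimension

section Torsion

variable {R : Type} [CommRing R] {M : Type} [AddCommGroup M] [Module R M]

theorem mem_tors_iff {a : Ideal R} {x : M} :
    x ∈ tors R a M ↔ ∃ t : ℕ, ∀ r ∈ a ^ t, r • x = 0 := by
  have hmono : Monotone fun t : ℕ => Submodule.torsionBySet R M ((a ^ t : Ideal R) : Set R) :=
    fun _ _ hst => Submodule.torsionBySet_le_torsionBySet_of_subset (Ideal.pow_le_pow_right hst)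
  rw [tors, Submodule.mem_iSup_of_directed _ hmono.directed_le]
  simp only [Submodule.mem_torsionBySet_iff, Subtype.forall, SetLike.mem_coe]

theorem support_tors_subset_zeroLocus (a : Ideal R) :
    Module.support R (tors R a M) ⊆ PrimeSpectrum.zeroLocus a := by
  intro q hq
  obtain ⟨⟨x, hx⟩, hann⟩ := Module.mem_support_iff_exists_annihilator.mp hq
  obtain ⟨t, ht⟩ := mem_tors_iff.mp hx
  have hpow : a ^ t ≤ q.asIdeal := fun r hr =>
    hann ((Submodule.mem_annihilator_span_singleton _ r).mpr (Subtype.ext (ht r hr)))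
  exact q.isPrime.le_of_pow_le hpow

theorem mDim_tors_prod_le {ι : Type*} (s : Finset ι) (p : ι → Ideal R) {c : WithBot ℕ∞}
    (h : ∀ j ∈ s, mDim R (R ⧸ p j) ≤ c) :
    mDim R (tors R (∏ j ∈ s, p j) M) ≤ c := by
  refine Order.krullDim_le_of_forall_mem_isUpperSet fun q hq => ?_
  obtain ⟨j, hj, hle⟩ :=
    (Ideal.IsPrime.prod_le q.isPrime).mp (support_tors_subset_zeroLocus _ hq)
  have hup : IsUpperSet (PrimeSpectrum.zeroLocus (p j : Set R)) := fun _ _ hQQ' hQ =>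
    (PrimeSpectrum.mem_zeroLocus _ _).mpr (hQ.trans hQQ')
  exact ⟨_, hup, hle, mDim_quotient (p j) ▸ h j hj⟩

end Torsion

section PrimaryDecomposition

variable {R : Type} [CommRing R] [IsNoetherianRing R] {M : Type} [AddCommGroup M] [Module R M]

/-- The image of `W` in `M ⧸ N` is nonzero, so `P` is one of its associated primes. -/
theorem mDim_quotient_le_of_not_le {N W : Submodule R M} {P : Ideal R}
    (hP : associatedPrimes R (M ⧸ N) = {P}) (hW : ¬W ≤ N) :
    mDim R (R ⧸ P) ≤ mDim R W := by
  set W' := W.map N.mkQ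
  have : Nontrivial W' := by
    rwa [Submodule.nontrivial_iff_ne_bot, ne_eq, ← le_bot_iff, Submodule.map_le_iff_le_comap,
      Submodule.comap_bot, Submodule.ker_mkQ]
  obtain ⟨Q, hQ⟩ := associatedPrimes.nonempty R W'
  have hQP : Q ∈ associatedPrimes R (M ⧸ N) :=
    associatedPrimes.subset_of_injective (f := W'.subtype) Subtype.val_injective hQ
  rw [hP, Set.mem_singleton_iff] at hQP
  subst hQP
  exact mDim_quotient_le_of_mem_support (P := ⟨Q, hQ.isPrime⟩) <|
    Module.support_subset_of_surjective (N.mkQ.submoduleMap W)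
      (LinearMap.submoduleMap_surjective _ _) hQ.mem_support

theorem deltaSub_le_of_associatedPrimes_eq {N : Submodule R M} {P : Ideal R}
    (hP : associatedPrimes R (M ⧸ N) = {P}) {c : ℕ} (hc : (c : WithBot ℕ∞) < mDim R (R ⧸ P)) :
    deltaSub R M c ≤ N :=
  sSup_le fun _ hW => by_contra fun hWN =>
    (mDim_quotient_le_of_not_le hP hWN).not_gt (lt_of_le_of_lt hW hc)

/-- A power of `p j` kills `M ⧸ N j`, so a large power of `∏ j ∈ s, p j` maps `⨅ j ∈ t, N j`
into every `N j`, hence into `⨅ j, N j = ⊥`. -/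
theorem iInf_le_tors_prod [Module.Finite R M] {ι : Type*} [Fintype ι] {p : ι → Ideal R}
    {N : ι → Submodule R M} (hdec : ⨅ j, N j = ⊥)
    (hprimary : ∀ j, associatedPrimes R (M ⧸ N j) = {p j}) {s t : Finset ι}
    (hst : ∀ j, j ∈ s ∨ j ∈ t) :
    ⨅ j ∈ t, N j ≤ tors R (∏ j ∈ s, p j) M := by
  choose n hn using fun j =>
    exists_pow_le_annihilator_of_associatedPrimes_subset (hprimary j).le
  intro x hx
  refine mem_tors_iff.mpr ⟨Finset.univ.sup n, fun r hr => ?_⟩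
  suffices r • x ∈ ⨅ j, N j by simpa [hdec] using this
  refine Submodule.mem_iInf _ |>.mpr fun j => ?_
  rcases hst j with hjs | hjt
  · have hrj : r ∈ p j ^ n j :=
      (Ideal.pow_right_mono (Ideal.prod_le_inf.trans (Finset.inf_le hjs)) _ |>.trans
        (Ideal.pow_le_pow_right (Finset.le_sup (Finset.mem_univ j)))) hr
    rw [← Submodule.Quotient.mk_eq_zero, Submodule.Quotient.mk_smul]
    exact Module.mem_annihilator.mp (hn j hrj) _
  · exact (N j).smul_mem r ((Submodule.mem_iInf _).mp ((Submodule.mem_iInf _).mp hx j) hjt)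

end PrimaryDecomposition

open IsLocalRing in
theorem stmt3_general (R : Type) [CommRing R] [IsNoetherianRing R]
    (M : Type) [AddCommGroup M] [Module R M] [Module.Finite R M]
    (d : ℕ)
    (m : ℕ) (p : Fin m → Ideal R)
    (N : Fin m → Submodule R M)
    (hdec : (⨅ j, N j) = ⊥)
    (hprimary : ∀ j : Fin m, associatedPrimes R (M ⧸ N j) = {p j}) :
    ∀ i ≤ d,
      deltaSub R M i =
        tors R (∏ j ∈ Finset.univ.filter
          (fun j => mDim R (R ⧸ p j) ≤ (i : WithBot ℕ∞)), p j) M ∧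
      deltaSub R M i =
        ⨅ j ∈ Finset.univ.filter (fun j => (i : WithBot ℕ∞) < mDim R (R ⧸ p j)), N j := by
  intro i _
  set s := Finset.univ.filter fun j => mDim R (R ⧸ p j) ≤ (i : WithBot ℕ∞)
  set t := Finset.univ.filter fun j => (i : WithBot ℕ∞) < mDim R (R ⧸ p j)
  have hKT : ⨅ j ∈ t, N j ≤ tors R (∏ j ∈ s, p j) M :=
    iInf_le_tors_prod hdec hprimary fun j => by simpa [s, t] using le_or_gt (mDim R (R ⧸ p j)) i
  have hTδ : tors R (∏ j ∈ s, p j) M ≤ deltaSub R M i :=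
    le_sSup (mDim_tors_prod_le s p fun j hj => (Finset.mem_filter.mp hj).2)
  have hδK : deltaSub R M i ≤ ⨅ j ∈ t, N j := le_iInf₂ fun j hj =>
    deltaSub_le_of_associatedPrimes_eq (hprimary j) (Finset.mem_filter.mp hj).2
  exact ⟨le_antisymm (hδK.trans hKT) hTδ, le_antisymm hδK (hKT.trans hTδ)⟩

open IsLocalRing in
/-- (Schenzel)  Let `M` be a finitely generated module of dimension `d` over
a Noetherian local ring `R`, with `Ass(M) = {p_1, …, p_m}` and `0 = N_1 ∩ ⋯ ∩ N_m` an
irredundant primary decomposition of `0` in `M` (`M/N_j` being `p_j`-primary).  Let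
`a_i = ∏_{dim R/p ≤ i, p ∈ Ass M} p` (`= R` if there is no such prime).  Then for all
`0 ≤ i ≤ d`, `δ_i(M) = H^0_{a_i}(M) = ⋂_{dim R/p_j > i} N_j` (the empty intersection
being `M`). -/
theorem stmt3 (R : Type) [CommRing R] [IsNoetherianRing R] [IsLocalRing R]
    (M : Type) [AddCommGroup M] [Module R M] [Module.Finite R M]
    (d : ℕ) (hd : mDim R M = (d : WithBot ℕ∞))
    (m : ℕ) (p : Fin m → Ideal R)
    (hp : Function.Injective p) (hAss : associatedPrimes R M = Set.range p)
    (N : Fin m → Submodule R M)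
    (hdec : (⨅ j, N j) = ⊥)
    (hirr : ∀ j : Fin m, (⨅ l ∈ ({j}ᶜ : Set (Fin m)), N l) ≠ ⊥)
    (hprimary : ∀ j : Fin m, associatedPrimes R (M ⧸ N j) = {p j}) :
    ∀ i ≤ d,
      deltaSub R M i =
        tors R (∏ j ∈ Finset.univ.filter
          (fun j => mDim R (R ⧸ p j) ≤ (i : WithBot ℕ∞)), p j) M ∧
      deltaSub R M i =
        ⨅ j ∈ Finset.univ.filter (fun j => (i : WithBot ℕ∞) < mDim R (R ⧸ p j)), N j :=
  stmt3_general R M d m p N hdec hprimary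
end

section
/- Let M be a d-dimensional finitely generated R-module. A filtration of M by submodules 0 ⊆ M_0 ⊆ M_1 ⊆ … ⊆ M_d = M is the dimension filtration of M if and only if Ass(M_i/M_{i-1}) = {p ∈ Ass(M) : dim(R/p) = i} for all i. -/
open CategoryTheory

/-- `F i / F (i-1)` with the convention `F (-1) = ⊥`. -/
noncomputable def filPred (R : Type) [CommRing R] {M : Type} [AddCommGroup M] [Module R M]
    (F : ℕ → Submodule R M) : ℕ → Submodule R M
  | 0 => ⊥
  | (i + 1) => F i

/-!
Over a Noetherian ring, `dim M ≤ c` holds iff `dim R/p ≤ c` for every associated prime `p` of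
`M`, because every prime of the support contains a minimal (hence associated) prime. Consequently
`Ass(M/δ_c(M))` consists exactly of the associated primes of `M` of dimension `> c`, which gives
the description of `Ass(δ_i/δ_{i-1})`. Conversely, if the factors of a filtration have associated
primes of dimension exactly `i`, induction along the filtration shows that the associated primes of
`M_i` have dimension `≤ i` and those of `M/M_i` dimension `> i`; these two properties characterise
`δ_i(M)`, since an associated prime of `δ_i(M)/M_i` would have to satisfy both bounds.
-/

open Module
open Function (Injective Surjective Exact)

theorem WithBot.natCast_add_one_le_iff {k : ℕ} {a : WithBot ℕ∞} :
    ((k + 1 : ℕ) : WithBot ℕ∞) ≤ a ↔ (k : WithBot ℕ∞) < a := by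
  induction a using WithBot.recBotCoe with
  | bot => simp
  | coe a =>
    norm_cast
    exact ENat.add_one_le_iff (ENat.natCast_ne_top k)

section Dimension

variable {R : Type} [CommRing R] {M N P : Type} [AddCommGroup M] [Module R M]
  [AddCommGroup N] [Module R N] [AddCommGroup P] [Module R P]

theorem mDim_le_of_support_subset (h : support R M ⊆ support R N) : mDim R M ≤ mDim R N :=
  Order.krullDim_le_of_strictMono (Set.inclusion h) fun _ _ ↦ id

theorem mDim_le_of_injective {f : M →ₗ[R] N} (hf : Injective f) : mDim R M ≤ mDim R N :=
  mDim_le_of_support_subset (support_subset_of_injective f hf)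

theorem mDim_le_of_surjective {f : M →ₗ[R] N} (hf : Surjective f) : mDim R N ≤ mDim R M :=
  mDim_le_of_support_subset (support_subset_of_surjective f hf)

theorem mDim_nonneg [Nontrivial M] : 0 ≤ mDim R M :=
  have := (nonempty_support_of_nontrivial (R := R) (M := M)).to_subtype
  Order.krullDim_nonneg

theorem support_quotient_ideal (I : Ideal R) :
    support R (R ⧸ I) = PrimeSpectrum.zeroLocus (I : Set R) := by
  rw [support_eq_zeroLocus, Ideal.annihilator_quotient]

theorem mDim_le_iff_forall_mem_support {c : WithBot ℕ∞} :
    mDim R M ≤ c ↔ ∀ q ∈ support R M, mDim R (R ⧸ q.asIdeal) ≤ c := by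
  refine ⟨fun h q hq ↦ le_trans (mDim_le_of_support_subset ?_) h, fun h ↦ iSup_le fun s ↦ ?_⟩
  · rw [support_quotient_ideal]
    exact fun q' hq' ↦ mem_support_mono ((PrimeSpectrum.mem_zeroLocus _ _).1 hq') hq
  · -- a chain in the support lies in the closed set `V(q)` of its first term `q`
    have hs (i) : (s i).1 ∈ PrimeSpectrum.zeroLocus (s.head.1.asIdeal : Set R) :=
      (PrimeSpectrum.mem_zeroLocus _ _).2 (s.monotone (Fin.zero_le i))
    refine le_trans ?_ (h s.head s.head.2)
    rw [mDim, support_quotient_ideal]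
    exact Order.LTSeries.length_le_krullDim ⟨s.length, fun i ↦ ⟨(s i).1, hs i⟩, s.step⟩

theorem mDim_le_of_exact {f : M →ₗ[R] N} {g : N →ₗ[R] P} (hf : Injective f) (hfg : Exact f g)
    (hg : Surjective g) {c : WithBot ℕ∞} (hM : mDim R M ≤ c) (hP : mDim R P ≤ c) :
    mDim R N ≤ c := by
  rw [mDim_le_iff_forall_mem_support] at hM hP ⊢
  rw [support_of_exact hfg hf hg]
  rintro q (hq | hq)
  exacts [hM q hq, hP q hq]

theorem Submodule.mDim_sup_le {N₁ N₂ : Submodule R M} {c : WithBot ℕ∞} (h₁ : mDim R N₁ ≤ c)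
    (h₂ : mDim R N₂ ≤ c) : mDim R ↥(N₁ ⊔ N₂) ≤ c := by
  have hsurj : Surjective ((inclusion le_sup_left).coprod (inclusion le_sup_right) :
      N₁ × N₂ →ₗ[R] ↥(N₁ ⊔ N₂)) := by
    rintro ⟨x, hx⟩
    obtain ⟨y, hy, z, hz, rfl⟩ := mem_sup.1 hx
    exact ⟨(⟨y, hy⟩, ⟨z, hz⟩), rfl⟩
  exact (mDim_le_of_surjective hsurj).trans
    (mDim_le_of_exact LinearMap.inl_injective .inl_snd LinearMap.snd_surjective h₁ h₂)

variable [IsNoetherianRing R]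

theorem IsAssociatedPrime.mDim_quotient_le {p : Ideal R} (h : IsAssociatedPrime p M) :
    mDim R (R ⧸ p) ≤ mDim R M := by
  obtain ⟨-, f, hf⟩ := (isAssociatedPrime_iff_exists_injective_linearMap p M).1 h
  exact mDim_le_of_injective hf

theorem exists_mem_associatedPrimes_le_of_mem_support [Module.Finite R M] {q : PrimeSpectrum R}
    (hq : q ∈ support R M) : ∃ p ∈ associatedPrimes R M, p ≤ q.asIdeal := by
  obtain ⟨p, hp, hpq⟩ := Ideal.exists_minimalPrimes_le (annihilator_le_of_mem_support hq)
  exact ⟨p, associatedPrimes.minimalPrimes_annihilator_subset_associatedPrimes R M hp, hpq⟩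

theorem mDim_le_iff_forall_mem_associatedPrimes [Module.Finite R M] {c : WithBot ℕ∞} :
    mDim R M ≤ c ↔ ∀ p ∈ associatedPrimes R M, mDim R (R ⧸ p) ≤ c := by
  refine ⟨fun h p hp ↦ (IsAssociatedPrime.mDim_quotient_le hp).trans h,
    fun h ↦ mDim_le_iff_forall_mem_support.2 fun q hq ↦ ?_⟩
  obtain ⟨p, hp, hpq⟩ := exists_mem_associatedPrimes_le_of_mem_support hq
  exact (mDim_le_of_surjective (Submodule.factor_surjective hpq)).trans (h p hp)

end Dimension

section Subquotient

variable {R : Type} [CommRing R] {M : Type} [AddCommGroup M] [Module R M]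
  (N₁ N₂ : Submodule R M)

noncomputable def subQuotEquivMapMkQ : subQuot R N₁ N₂ ≃ₗ[R] N₂.map N₁.mkQ :=
  let f : N₂ →ₗ[R] M ⧸ N₁ := N₁.mkQ ∘ₗ N₂.subtype
  have hker : LinearMap.ker f = N₁.comap N₂.subtype := by
    rw [LinearMap.ker_comp, Submodule.ker_mkQ]
  have hrange : LinearMap.range f = N₂.map N₁.mkQ := by
    rw [LinearMap.range_comp, Submodule.range_subtype]
  (Submodule.quotEquivOfEq _ _ hker.symm).trans
    (f.quotKerEquivRange.trans (LinearEquiv.ofEq _ _ hrange))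

theorem subsingleton_subQuot_iff : Subsingleton (subQuot R N₁ N₂) ↔ N₂ ≤ N₁ := by
  rw [Submodule.Quotient.subsingleton_iff, Submodule.comap_subtype_eq_top]

theorem mDim_subQuot_le : mDim R (subQuot R N₁ N₂) ≤ mDim R N₂ :=
  mDim_le_of_surjective (Submodule.mkQ_surjective _)

theorem associatedPrimes_subQuot_subset :
    associatedPrimes R (subQuot R N₁ N₂) ⊆ associatedPrimes R (M ⧸ N₁) := by
  rw [LinearEquiv.AssociatedPrimes.eq (subQuotEquivMapMkQ N₁ N₂)]
  exact associatedPrimes.subset_of_injective (Submodule.injective_subtype _)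

theorem associatedPrimes_subQuot_bot :
    associatedPrimes R (subQuot R ⊥ N₂) = associatedPrimes R N₂ :=
  LinearEquiv.AssociatedPrimes.eq (Submodule.quotEquivOfEqBot _ (by
    rw [Submodule.comap_bot, Submodule.ker_subtype]))

theorem associatedPrimes_subset_union_quotient :
    associatedPrimes R M ⊆ associatedPrimes R N₁ ∪ associatedPrimes R (M ⧸ N₁) :=
  associatedPrimes.subset_union_of_exact (Submodule.injective_subtype _)
    (LinearMap.exact_subtype_mkQ N₁)

variable {N₁ N₂}

theorem associatedPrimes_subset_union_subQuot (h : N₁ ≤ N₂) :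
    associatedPrimes R N₂ ⊆ associatedPrimes R N₁ ∪ associatedPrimes R (subQuot R N₁ N₂) := by
  have := associatedPrimes_subset_union_quotient (N₁.comap N₂.subtype)
  rwa [LinearEquiv.AssociatedPrimes.eq (Submodule.comapSubtypeEquivOfLe h)] at this

theorem associatedPrimes_quotient_subset_union (h : N₁ ≤ N₂) :
    associatedPrimes R (M ⧸ N₁) ⊆
      associatedPrimes R (subQuot R N₁ N₂) ∪ associatedPrimes R (M ⧸ N₂) := by
  have := associatedPrimes_subset_union_quotient (N₂.map N₁.mkQ)
  rwa [LinearEquiv.AssociatedPrimes.eq (Submodule.quotientQuotientEquivQuotient N₁ N₂ h),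
    ← LinearEquiv.AssociatedPrimes.eq (subQuotEquivMapMkQ N₁ N₂)] at this

end Subquotient

section DimensionFiltration

variable {R : Type} [CommRing R] {M : Type} [AddCommGroup M] [Module R M]

theorem le_deltaSub_of_mDim_le {c : ℕ} {N : Submodule R M} (h : mDim R N ≤ c) :
    N ≤ deltaSub R M c :=
  le_sSup h

variable [IsNoetherianRing R] [Module.Finite R M]

theorem mDim_deltaSub_le (c : ℕ) : mDim R (deltaSub R M c) ≤ c := by
  have hsup : SupClosed {N : Submodule R M | mDim R N ≤ c} :=
    fun _ h₁ _ h₂ ↦ Submodule.mDim_sup_le h₁ h₂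
  have hbot : mDim R (⊥ : Submodule R M) ≤ c := by
    rw [mDim, support_eq_empty, Order.krullDim_eq_bot_iff.2 (Set.isEmpty_coe_sort.2 rfl)]
    exact bot_le
  -- in a Noetherian lattice a nonempty sup-closed family contains its supremum
  exact CompleteLattice.IsSupFiniteCompact.isSupClosedCompact _
    (CompleteLattice.WellFoundedGT.isSupFiniteCompact _) _ ⟨⊥, hbot⟩ hsup

theorem le_deltaSub_iff {c : ℕ} {N : Submodule R M} : N ≤ deltaSub R M c ↔ mDim R N ≤ c :=
  ⟨fun h ↦ (mDim_le_of_injective (Submodule.inclusion_injective h)).trans (mDim_deltaSub_le c),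
    le_deltaSub_of_mDim_le⟩

theorem associatedPrimes_quotient_prime (p : Ideal R) [hp : p.IsPrime] :
    associatedPrimes R (R ⧸ p) = {p} := by
  rw [associatedPrimes.eq_singleton_of_isPrimary hp.isPrimary, hp.radical]

theorem associatedPrimes_quotient_deltaSub (c : ℕ) :
    associatedPrimes R (M ⧸ deltaSub R M c) =
      {p ∈ associatedPrimes R M | (c : WithBot ℕ∞) < mDim R (R ⧸ p)} := by
  set δ := deltaSub R M c
  have hδ : ∀ p ∈ associatedPrimes R δ, mDim R (R ⧸ p) ≤ c :=
    mDim_le_iff_forall_mem_associatedPrimes.1 (mDim_deltaSub_le c)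
  ext p
  refine ⟨fun hp ↦ ?_, fun ⟨hp, hc⟩ ↦ ?_⟩
  · obtain ⟨hprime, f, hf⟩ := (isAssociatedPrime_iff_exists_injective_linearMap p _).1 hp
    -- the preimage `N` of the copy of `R ⧸ p` is an extension of `R ⧸ p` by `δ`
    set N := (LinearMap.range f).comap δ.mkQ
    have hδN : δ ≤ N := by
      simpa only [δ.ker_mkQ] using LinearMap.ker_le_comap (p := LinearMap.range f) δ.mkQ
    have hassN : associatedPrimes R (subQuot R δ N) = {p} := by
      rw [LinearEquiv.AssociatedPrimes.eq (subQuotEquivMapMkQ δ N),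
        Submodule.map_comap_eq_of_surjective δ.mkQ_surjective,
        ← LinearEquiv.AssociatedPrimes.eq (LinearEquiv.ofInjective f hf),
        associatedPrimes_quotient_prime]
    have hNδ : ¬ mDim R N ≤ c := fun h ↦ by
      have := (subsingleton_subQuot_iff δ N).2 (le_deltaSub_iff.2 h)
      rw [associatedPrimes.eq_empty_of_subsingleton] at hassN
      exact Set.singleton_ne_empty p hassN.symm
    obtain ⟨q, hq, hqc⟩ : ∃ q ∈ associatedPrimes R N, ¬ mDim R (R ⧸ q) ≤ c := by
      simpa using mt mDim_le_iff_forall_mem_associatedPrimes.2 hNδ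
    rcases associatedPrimes_subset_union_subQuot hδN hq with hq' | hq'
    · exact absurd (hδ q hq') hqc
    · obtain rfl : q = p := by rwa [hassN] at hq'
      exact ⟨associatedPrimes.subset_of_injective (Submodule.injective_subtype _) hq, not_le.1 hqc⟩
  · rcases associatedPrimes_subset_union_quotient δ hp with h | h
    exacts [absurd (hδ p h) (not_le.2 hc), h]

theorem deltaSubPred_le_deltaSub (i : ℕ) : deltaSubPred R M i ≤ deltaSub R M i := by
  cases i with
  | zero => exact bot_le
  | succ k =>
    exact le_deltaSub_of_mDim_le ((mDim_deltaSub_le k).trans (by exact_mod_cast k.le_succ))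

theorem associatedPrimes_quotient_deltaSubPred (i : ℕ) :
    associatedPrimes R (M ⧸ deltaSubPred R M i) =
      {p ∈ associatedPrimes R M | (i : WithBot ℕ∞) ≤ mDim R (R ⧸ p)} := by
  cases i with
  | zero =>
    rw [deltaSubPred, LinearEquiv.AssociatedPrimes.eq (Submodule.quotEquivOfEqBot ⊥ rfl)]
    ext p
    refine ⟨fun hp ↦ ⟨hp, ?_⟩, And.left⟩
    have := Ideal.Quotient.nontrivial_iff.2 hp.isPrime.ne_top
    exact_mod_cast mDim_nonneg
  | succ k =>
    simp only [deltaSubPred, WithBot.natCast_add_one_le_iff]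
    exact associatedPrimes_quotient_deltaSub k

theorem associatedPrimes_subQuot_deltaSubPred_deltaSub (i : ℕ) :
    associatedPrimes R (subQuot R (deltaSubPred R M i) (deltaSub R M i)) =
      {p ∈ associatedPrimes R M | mDim R (R ⧸ p) = i} := by
  ext p
  refine ⟨fun hp ↦ ?_, fun ⟨hpM, hpi⟩ ↦ ?_⟩
  · obtain ⟨hpM, hip⟩ := (associatedPrimes_quotient_deltaSubPred i).le
      (associatedPrimes_subQuot_subset _ _ hp)
    refine ⟨hpM, le_antisymm ?_ hip⟩
    exact (IsAssociatedPrime.mDim_quotient_le hp).trans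
      ((mDim_subQuot_le _ _).trans (mDim_deltaSub_le i))
  · have hp : p ∈ associatedPrimes R (M ⧸ deltaSubPred R M i) := by
      rw [associatedPrimes_quotient_deltaSubPred]
      exact ⟨hpM, hpi.ge⟩
    rcases associatedPrimes_quotient_subset_union (deltaSubPred_le_deltaSub i) hp with h | h
    · exact h
    · rw [associatedPrimes_quotient_deltaSub] at h
      exact absurd h.2 hpi.le.not_gt

theorem eq_deltaSub_of_forall_associatedPrimes {c : ℕ} {N : Submodule R M}
    (hN : ∀ p ∈ associatedPrimes R N, mDim R (R ⧸ p) ≤ c)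
    (hMN : ∀ p ∈ associatedPrimes R (M ⧸ N), (c : WithBot ℕ∞) < mDim R (R ⧸ p)) :
    N = deltaSub R M c := by
  refine (le_deltaSub_of_mDim_le (mDim_le_iff_forall_mem_associatedPrimes.2 hN)).antisymm
    ((subsingleton_subQuot_iff N _).1 (not_nontrivial_iff_subsingleton.1 fun _ ↦ ?_))
  obtain ⟨p, hp⟩ := associatedPrimes.nonempty R (subQuot R N (deltaSub R M c))
  exact (hMN p (associatedPrimes_subQuot_subset _ _ hp)).not_ge
    ((IsAssociatedPrime.mDim_quotient_le hp).trans
      ((mDim_subQuot_le _ _).trans (mDim_deltaSub_le c)))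

end DimensionFiltration

section Filtration

variable {R : Type} [CommRing R] {M : Type} [AddCommGroup M] [Module R M]
  {F : ℕ → Submodule R M} {d : ℕ}

theorem mDim_le_of_mem_associatedPrimes_filtration (hmono : ∀ i < d, F i ≤ F (i + 1))
    (hF : ∀ i ≤ d, ∀ p ∈ associatedPrimes R (subQuot R (filPred R F i) (F i)),
      mDim R (R ⧸ p) = i)
    {i : ℕ} (hi : i ≤ d) : ∀ p ∈ associatedPrimes R (F i), mDim R (R ⧸ p) ≤ i := by
  induction i with
  | zero =>
    intro p hp
    rw [← associatedPrimes_subQuot_bot] at hp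
    exact (hF 0 hi p hp).le
  | succ k ih =>
    intro p hp
    rcases associatedPrimes_subset_union_subQuot (hmono k hi) hp with h | h
    · exact (ih (by omega) p h).trans (by exact_mod_cast k.le_succ)
    · exact (hF (k + 1) hi p h).le

theorem lt_mDim_of_mem_associatedPrimes_quotient_filtration (hmono : ∀ i < d, F i ≤ F (i + 1))
    (htop : F d = ⊤)
    (hF : ∀ i ≤ d, ∀ p ∈ associatedPrimes R (subQuot R (filPred R F i) (F i)),
      mDim R (R ⧸ p) = i)
    {i : ℕ} (hi : i ≤ d) :
    ∀ p ∈ associatedPrimes R (M ⧸ F i), (i : WithBot ℕ∞) < mDim R (R ⧸ p) := by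
  induction hi using Nat.decreasingInduction with
  | self =>
    intro p hp
    rw [htop, associatedPrimes.eq_empty_of_subsingleton] at hp
    exact hp.elim
  | of_succ k hk ih =>
    intro p hp
    have hk' : (k : WithBot ℕ∞) < (k + 1 : ℕ) := by exact_mod_cast k.lt_succ_self
    rcases associatedPrimes_quotient_subset_union (hmono k hk) hp with h | h
    · exact (hF (k + 1) hk p h).symm ▸ hk'
    · exact hk'.trans (ih p h)

end Filtration

open IsLocalRing in
theorem stmt5_general (R : Type) [CommRing R] [IsNoetherianRing R]
    (M : Type) [AddCommGroup M] [Module R M] [Module.Finite R M]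
    (d : ℕ)
    (F : ℕ → Submodule R M) (hmono : ∀ i < d, F i ≤ F (i + 1)) (htop : F d = ⊤) :
    (∀ i ≤ d, F i = deltaSub R M i) ↔
      (∀ i ≤ d,
        associatedPrimes R (subQuot R (filPred R F i) (F i)) =
          {p ∈ associatedPrimes R M | mDim R (R ⧸ p) = (i : WithBot ℕ∞)}) := by
  constructor
  · intro hF i hi
    have hpred : filPred R F i = deltaSubPred R M i := by
      cases i with
      | zero => rfl
      | succ k => exact hF k (by omega)
    rw [hpred, hF i hi]
    exact associatedPrimes_subQuot_deltaSubPred_deltaSub i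
  · intro hAss i hi
    have hF : ∀ j ≤ d, ∀ p ∈ associatedPrimes R (subQuot R (filPred R F j) (F j)),
        mDim R (R ⧸ p) = j := fun j hj p hp ↦ ((hAss j hj).le hp).2
    exact eq_deltaSub_of_forall_associatedPrimes
      (mDim_le_of_mem_associatedPrimes_filtration hmono hF hi)
      (lt_mDim_of_mem_associatedPrimes_quotient_filtration hmono htop hF hi)

open IsLocalRing in
/-- Let `M` be a `d`-dimensional finitely generated module over a Noetherian
local ring `R`.  A filtration `0 ⊆ M_0 ⊆ M_1 ⊆ ⋯ ⊆ M_d = M` is the dimension filtration of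
`M` if and only if `Ass(M_i/M_{i-1}) = {p ∈ Ass M | dim R/p = i}` for all `i`. -/
theorem stmt5 (R : Type) [CommRing R] [IsNoetherianRing R] [IsLocalRing R]
    (M : Type) [AddCommGroup M] [Module R M] [Module.Finite R M]
    (d : ℕ) (hd : mDim R M = (d : WithBot ℕ∞))
    (F : ℕ → Submodule R M) (hmono : ∀ i < d, F i ≤ F (i + 1)) (htop : F d = ⊤) :
    (∀ i ≤ d, F i = deltaSub R M i) ↔
      (∀ i ≤ d,
        associatedPrimes R (subQuot R (filPred R F i) (F i)) =
          {p ∈ associatedPrimes R M | mDim R (R ⧸ p) = (i : WithBot ℕ∞)}) :=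
  stmt5_general R M d F hmono htop
end
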